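/- arXiv:2208.01391 — 6 statements merged into one kernel-verified Lean document; each statement's English description precedes it below -/
import Mathlib

section
/- Let ε₀ > 0 be a real number, let εₘ ∈ ℂ satisfy Re(εₘ) < 0 and Im(εₘ) > 0, and set c := conj(εₘ − ε₀). Let γ ∈ (0, π/2) satisfy Re(e^{iγ}·conj(εₘ)) > 0 and Re(e^{iγ}·c) < 0. Let M be a complex 3×3 matrix with Mᵀ = M, and suppose that for every ξ ∈ ℝ³ one has (i) (ξ·Im(c·M)ξ)/Im(c) ≤ ‖ξ‖² and (ii) (ξ·Re(e^{iγ}·c·M)ξ)/Re(e^{iγ}·c) ≥ ‖ξ‖². If t ∈ ℝ³ is a unit vector with t·Mt = 1, then M t = t, i.e. t (viewed as a complex vector) is an eigenvector of M corresponding to the eigenvalue 1. -/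
/-!
By (i) and (ii), with `d = e^{iγ} c`, the real symmetric matrices `Im(c M)` and `Re(d M)` satisfy
`ξ · Im(c M) ξ ≥ Im c ‖ξ‖²` and `ξ · Re(d M) ξ ≤ Re d ‖ξ‖²`, and `t · M t = 1` makes both bounds
attained at `t`. A vector at which the Rayleigh quotient of a real symmetric matrix is extremal is an
eigenvector, so `Im(c (M t)) = Im(c) t` and `Re(d (M t)) = Re(d) t`. Hence `w = c (M t - t)` is real
with `Re(e^{iγ} w) = cos γ · w = 0`, and `cos γ > 0`, `c ≠ 0` give `M t = t`.
-/

open Complex BigOperators Finset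

/-- Quadratic form `ξ · A ξ = ∑ i j, ξ i * A i j * ξ j` of a complex matrix
evaluated at a real vector (viewed in `ℂ`). -/
noncomputable def cquadForm (A : Matrix (Fin 3) (Fin 3) ℂ) (ξ : Fin 3 → ℝ) : ℂ :=
  ∑ i, ∑ j, (ξ i : ℂ) * A i j * (ξ j : ℂ)

open Matrix

namespace Matrix

variable {n : Type*} [Fintype n]

theorem dotProduct_mulVec_eq_sum_sum {R : Type*} [CommSemiring R] (A : Matrix n n R)
    (x : n → R) : x ⬝ᵥ A *ᵥ x = ∑ i, ∑ j, x i * A i j * x j := by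
  simp only [dotProduct, mulVec, Finset.mul_sum, mul_assoc]

theorem mulVec_eq_smul_of_le_dotProduct [DecidableEq n] {A : Matrix n n ℝ} (hA : A.IsSymm)
    {μ : ℝ} (hle : ∀ x, μ * (x ⬝ᵥ x) ≤ x ⬝ᵥ A *ᵥ x) {t : n → ℝ}
    (ht : t ⬝ᵥ A *ᵥ t = μ * (t ⬝ᵥ t)) : A *ᵥ t = μ • t := by
  have hshift : ∀ x, (A - μ • 1) *ᵥ x = A *ᵥ x - μ • x := fun x => by
    rw [sub_mulVec, smul_mulVec, one_mulVec]
  have hpsd : (A - μ • 1).PosSemidef := by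
    refine .of_dotProduct_mulVec_nonneg ?_ fun x => ?_
    · exact isHermitian_iff_isSymm.2 (hA.sub (isSymm_one.smul μ))
    · rw [star_trivial, hshift, dotProduct_sub, dotProduct_smul, smul_eq_mul, sub_nonneg]
      exact hle x
  have hker := (hpsd.dotProduct_mulVec_zero_iff t).1 (by
    rw [star_trivial, hshift, dotProduct_sub, dotProduct_smul, smul_eq_mul, ht, sub_self])
  rwa [hshift, sub_eq_zero] at hker

theorem mulVec_eq_smul_of_dotProduct_le [DecidableEq n] {A : Matrix n n ℝ} (hA : A.IsSymm)
    {μ : ℝ} (hle : ∀ x, x ⬝ᵥ A *ᵥ x ≤ μ * (x ⬝ᵥ x)) {t : n → ℝ}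
    (ht : t ⬝ᵥ A *ᵥ t = μ * (t ⬝ᵥ t)) : A *ᵥ t = μ • t := by
  have h := mulVec_eq_smul_of_le_dotProduct (A := -A) (μ := -μ) (t := t) hA.neg
    (fun x => by simpa [neg_mulVec, neg_mul] using hle x)
    (by simp [neg_mulVec, ht])
  simpa [neg_mulVec] using h

theorem map_mulVec_ofReal (f : ℂ →ₗ[ℝ] ℝ) (M : Matrix n n ℂ) (t : n → ℝ) :
    M.map f *ᵥ t = fun k => f ((M *ᵥ fun i => (t i : ℂ)) k) := by
  ext k
  simp only [mulVec, dotProduct, map_apply, map_sum]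
  refine Finset.sum_congr rfl fun i _ => ?_
  rw [mul_comm (M k i), ← real_smul, map_smul, smul_eq_mul, mul_comm]

theorem dotProduct_map_mulVec_ofReal (f : ℂ →ₗ[ℝ] ℝ) (M : Matrix n n ℂ) (t : n → ℝ) :
    t ⬝ᵥ M.map f *ᵥ t = f ((fun i => (t i : ℂ)) ⬝ᵥ M *ᵥ fun i => (t i : ℂ)) := by
  simp only [map_mulVec_ofReal, dotProduct, map_sum, ← real_smul, map_smul, smul_eq_mul]

end Matrix

theorem Complex.eq_ofReal_of_im_mul_eq_of_re_exp_mul_eq {c z : ℂ} {x γ : ℝ} (hc : c ≠ 0)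
    (hγ : Real.cos γ ≠ 0) (him : (c * z).im = c.im * x)
    (hre : (exp (γ * I) * c * z).re = (exp (γ * I) * c).re * x) : z = x := by
  set w := c * (z - x) with hw
  have hw_im : w.im = 0 := by
    simp only [hw, mul_sub, sub_im, him, mul_im, ofReal_re, ofReal_im]; ring
  have hw_re : Real.cos γ * w.re = 0 := by
    have : (exp (γ * I) * w).re = 0 := by
      rw [hw, ← mul_assoc, mul_sub, sub_re, hre, re_mul_ofReal, sub_self]
    simpa [mul_re, exp_ofReal_mul_I_re, exp_ofReal_mul_I_im, hw_im] using this
  have hw0 : w = 0 := Complex.ext (by simpa [hγ] using hw_re) hw_im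
  rw [hw, mul_eq_zero, sub_eq_zero] at hw0
  exact hw0.resolve_left hc

theorem cquadForm_eq_dotProduct_mulVec (M : Matrix (Fin 3) (Fin 3) ℂ) (ξ : Fin 3 → ℝ) :
    cquadForm M ξ = (fun i => (ξ i : ℂ)) ⬝ᵥ M *ᵥ fun i => (ξ i : ℂ) :=
  (M.dotProduct_mulVec_eq_sum_sum _).symm

theorem tangent_eigenvector_general
    (ε₀ : ℝ)
    (εₘ : ℂ) (him : 0 < εₘ.im)
    (c : ℂ) (hc : c = (starRingEnd ℂ) (εₘ - (ε₀ : ℂ)))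
    (γ : ℝ) (hγ : γ ∈ Set.Ioo 0 (Real.pi / 2))
    (hγc : (Complex.exp (γ * Complex.I) * c).re < 0)
    (M : Matrix (Fin 3) (Fin 3) ℂ) (hMsymm : M.transpose = M)
    (hIm : ∀ ξ : Fin 3 → ℝ,
      (∑ i, ∑ j, ξ i * (c * M i j).im * ξ j) / c.im ≤ ∑ i, ξ i ^ 2)
    (hRe : ∀ ξ : Fin 3 → ℝ,
      (∑ i, ∑ j, ξ i * (Complex.exp (γ * Complex.I) * c * M i j).re * ξ j) /
          (Complex.exp (γ * Complex.I) * c).re ≥ ∑ i, ξ i ^ 2)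
    (t : Fin 3 → ℝ) (ht : ∑ i, t i ^ 2 = 1)
    (htM : cquadForm M t = 1) :
    M.mulVec (fun i => (t i : ℂ)) = fun i => (t i : ℂ) := by
  have hcim : c.im < 0 := by simpa [hc] using him
  have hcos : Real.cos γ ≠ 0 :=
    (Real.cos_pos_of_mem_Ioo ⟨by linarith [hγ.1, Real.pi_pos], hγ.2⟩).ne'
  have hsq : ∀ ξ : Fin 3 → ℝ, ∑ i, ξ i ^ 2 = ξ ⬝ᵥ ξ := fun ξ => by simp [dotProduct, sq]
  set d := Complex.exp (γ * Complex.I) * c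
  have hImt := mulVec_eq_smul_of_le_dotProduct (A := M.map (imLm ∘ₗ LinearMap.mulLeft ℝ c))
    (IsSymm.map hMsymm _) (μ := c.im) (t := t)
    (fun ξ => by
      rw [dotProduct_mulVec_eq_sum_sum, ← hsq, mul_comm]
      exact (div_le_iff_of_neg hcim).1 (hIm ξ))
    (by rw [dotProduct_map_mulVec_ofReal, ← cquadForm_eq_dotProduct_mulVec, htM, ← hsq, ht]; simp)
  have hRet := mulVec_eq_smul_of_dotProduct_le (A := M.map (reLm ∘ₗ LinearMap.mulLeft ℝ d))
    (IsSymm.map hMsymm _) (μ := d.re) (t := t)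
    (fun ξ => by
      rw [dotProduct_mulVec_eq_sum_sum, ← hsq, mul_comm]
      exact (le_div_iff_of_neg hγc).1 (hRe ξ))
    (by rw [dotProduct_map_mulVec_ofReal, ← cquadForm_eq_dotProduct_mulVec, htM, ← hsq, ht]; simp)
  rw [map_mulVec_ofReal] at hImt hRet
  funext k
  refine eq_ofReal_of_im_mul_eq_of_re_exp_mul_eq (hcim.ne ∘ congrArg im) hcos ?_ ?_
  · exact congrFun hImt k
  · exact congrFun hRet k

/-- The matrix-algebraic core of Lemma 2.5: under the polarization tensor bounds
(Lemma A.1), a unit vector `t` with `t · M t = 1` is an eigenvector of `M` with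
eigenvalue `1`. -/
theorem tangent_eigenvector
    (ε₀ : ℝ) (hε₀ : 0 < ε₀)
    (εₘ : ℂ) (hre : εₘ.re < 0) (him : 0 < εₘ.im)
    (c : ℂ) (hc : c = (starRingEnd ℂ) (εₘ - (ε₀ : ℂ)))
    (γ : ℝ) (hγ : γ ∈ Set.Ioo 0 (Real.pi / 2))
    (hγm : 0 < (Complex.exp (γ * Complex.I) * (starRingEnd ℂ) εₘ).re)
    (hγc : (Complex.exp (γ * Complex.I) * c).re < 0)
    (M : Matrix (Fin 3) (Fin 3) ℂ) (hMsymm : M.transpose = M)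
    (hIm : ∀ ξ : Fin 3 → ℝ,
      (∑ i, ∑ j, ξ i * (c * M i j).im * ξ j) / c.im ≤ ∑ i, ξ i ^ 2)
    (hRe : ∀ ξ : Fin 3 → ℝ,
      (∑ i, ∑ j, ξ i * (Complex.exp (γ * Complex.I) * c * M i j).re * ξ j) /
          (Complex.exp (γ * Complex.I) * c).re ≥ ∑ i, ξ i ^ 2)
    (t : Fin 3 → ℝ) (ht : ∑ i, t i ^ 2 = 1)
    (htM : cquadForm M t = 1) :
    M.mulVec (fun i => (t i : ℂ)) = fun i => (t i : ℂ) :=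
  tangent_eigenvector_general ε₀ εₘ him c hc γ hγ hγc M hMsymm hIm hRe t ht htM
end

section
/- Let ε₀ > 0 be a real number, let εₘ ∈ ℂ satisfy Re(εₘ) < 0 and Im(εₘ) > 0, and set c := conj(εₘ − ε₀). Let γ ∈ (0, π/2) satisfy Re(e^{iγ}·conj(εₘ)) > 0 and Re(e^{iγ}·c) < 0. Let M be a complex 3×3 matrix such that for every ξ ∈ ℝ³ one has (i) (ξ·Im(c·M)ξ)/Im(c) ≤ ‖ξ‖² and (ii) (ξ·Re(e^{iγ}·c·M)ξ)/Re(e^{iγ}·c) ≥ ‖ξ‖². Then ξ·Im(M)ξ ≤ 0 for every ξ ∈ ℝ³. -/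
open Complex BigOperators Finset

/-!
Write `ξ·Mξ = X + iY` and `N = ‖ξ‖²`. Since `Im c < 0` and `Re(e^{iγ} c) < 0`, clearing the
denominators turns (i) and (ii) into two real linear inequalities in `X` and `Y`, giving
`N + (Im(e^{iγ} c) / Re(e^{iγ} c)) Y ≤ X ≤ N - (Re c / Im c) Y`. Both ratios are positive,
because `c` lies in the open third quadrant and a rotation by `γ ∈ (0, π/2)` keeps it in the
lower half-plane; hence `Y ≤ 0`.
-/

theorem Complex.sum_sum_mul_map_mul {ι : Type*} [Fintype ι] (f : ℂ →ₗ[ℝ] ℝ) (ξ : ι → ℝ)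
    (A : Matrix ι ι ℂ) :
    ∑ i, ∑ j, ξ i * f (A i j) * ξ j = f (∑ i, ∑ j, (ξ i : ℂ) * A i j * ξ j) := by
  simp only [map_sum]
  refine sum_congr rfl fun i _ => sum_congr rfl fun j _ => ?_
  have hsmul : (ξ i : ℂ) * A i j * ξ j = (ξ i * ξ j) • A i j := by
    rw [real_smul]; push_cast; ring
  rw [hsmul, map_smul, smul_eq_mul]; ring

theorem Complex.sum_sum_mul_im_mul_mul {ι : Type*} [Fintype ι] (z : ℂ) (ξ : ι → ℝ)
    (A : Matrix ι ι ℂ) :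
    ∑ i, ∑ j, ξ i * (z * A i j).im * ξ j = (z * ∑ i, ∑ j, (ξ i : ℂ) * A i j * ξ j).im :=
  sum_sum_mul_map_mul (imLm.comp (LinearMap.mulLeft ℝ z)) ξ A

theorem Complex.sum_sum_mul_re_mul_mul {ι : Type*} [Fintype ι] (z : ℂ) (ξ : ι → ℝ)
    (A : Matrix ι ι ℂ) :
    ∑ i, ∑ j, ξ i * (z * A i j).re * ξ j = (z * ∑ i, ∑ j, (ξ i : ℂ) * A i j * ξ j).re :=
  sum_sum_mul_map_mul (reLm.comp (LinearMap.mulLeft ℝ z)) ξ A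

theorem Complex.im_exp_mul_I_mul_neg {γ : ℝ} (hγ : γ ∈ Set.Ioo 0 (Real.pi / 2)) {w : ℂ}
    (hre : w.re < 0) (him : w.im < 0) : (exp (γ * I) * w).im < 0 := by
  have hcos : 0 < Real.cos γ :=
    Real.cos_pos_of_mem_Ioo ⟨by linarith [hγ.1, Real.pi_pos], hγ.2⟩
  have hsin : 0 < Real.sin γ :=
    Real.sin_pos_of_pos_of_lt_pi hγ.1 (by linarith [hγ.2, Real.pi_pos])
  rw [mul_im, exp_ofReal_mul_I_re, exp_ofReal_mul_I_im]
  nlinarith [mul_neg_of_pos_of_neg hcos him, mul_neg_of_pos_of_neg hsin hre]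

theorem Complex.im_nonpos_of_im_mul_div_le_of_le_re_mul_div {z w m : ℂ} {N : ℝ}
    (hzre : z.re < 0) (hzim : z.im < 0) (hwre : w.re < 0) (hwim : w.im < 0)
    (hz : (z * m).im / z.im ≤ N) (hw : N ≤ (w * m).re / w.re) : m.im ≤ 0 := by
  rw [div_le_iff_of_neg hzim, mul_im] at hz
  rw [le_div_iff_of_neg hwre, mul_re] at hw
  nlinarith [mul_pos_of_neg_of_neg hwre hzre, mul_pos_of_neg_of_neg hzim hwim]

theorem im_polarization_tensor_nonpos_general
    (ε₀ : ℝ) (hε₀ : 0 < ε₀)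
    (εₘ : ℂ) (hre : εₘ.re < 0) (him : 0 < εₘ.im)
    (c : ℂ) (hc : c = (starRingEnd ℂ) (εₘ - (ε₀ : ℂ)))
    (γ : ℝ) (hγ : γ ∈ Set.Ioo 0 (Real.pi / 2))
    (hγc : (Complex.exp (γ * Complex.I) * c).re < 0)
    (M : Matrix (Fin 3) (Fin 3) ℂ)
    (hIm : ∀ ξ : Fin 3 → ℝ,
      (∑ i, ∑ j, ξ i * (c * M i j).im * ξ j) / c.im ≤ ∑ i, ξ i ^ 2)
    (hRe : ∀ ξ : Fin 3 → ℝ,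
      (∑ i, ∑ j, ξ i * (Complex.exp (γ * Complex.I) * c * M i j).re * ξ j) /
          (Complex.exp (γ * Complex.I) * c).re ≥ ∑ i, ξ i ^ 2) :
    ∀ ξ : Fin 3 → ℝ, ∑ i, ∑ j, ξ i * (M i j).im * ξ j ≤ 0 := by
  intro ξ
  have hcre : c.re < 0 := by
    rw [hc, map_sub, conj_ofReal, sub_re, conj_re, ofReal_re]; linarith
  have hcim : c.im < 0 := by simpa [hc] using him
  have hIm' := hIm ξ
  have hRe' := hRe ξ
  rw [sum_sum_mul_im_mul_mul] at hIm'
  rw [sum_sum_mul_re_mul_mul] at hRe'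
  have hform := im_nonpos_of_im_mul_div_le_of_le_re_mul_div hcre hcim hγc
    (im_exp_mul_I_mul_neg hγ hcre hcim) hIm' hRe'
  exact (sum_sum_mul_map_mul imLm ξ M).trans_le hform

/-- The intermediate inequality in the proof of Lemma 2.5: under the polarization
tensor bounds of Lemma A.1, the imaginary part of the polarization tensor is
negative semidefinite. -/
theorem im_polarization_tensor_nonpos
    (ε₀ : ℝ) (hε₀ : 0 < ε₀)
    (εₘ : ℂ) (hre : εₘ.re < 0) (him : 0 < εₘ.im)
    (c : ℂ) (hc : c = (starRingEnd ℂ) (εₘ - (ε₀ : ℂ)))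
    (γ : ℝ) (hγ : γ ∈ Set.Ioo 0 (Real.pi / 2))
    (hγm : 0 < (Complex.exp (γ * Complex.I) * (starRingEnd ℂ) εₘ).re)
    (hγc : (Complex.exp (γ * Complex.I) * c).re < 0)
    (M : Matrix (Fin 3) (Fin 3) ℂ)
    (hIm : ∀ ξ : Fin 3 → ℝ,
      (∑ i, ∑ j, ξ i * (c * M i j).im * ξ j) / c.im ≤ ∑ i, ξ i ^ 2)
    (hRe : ∀ ξ : Fin 3 → ℝ,
      (∑ i, ∑ j, ξ i * (Complex.exp (γ * Complex.I) * c * M i j).re * ξ j) /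
          (Complex.exp (γ * Complex.I) * c).re ≥ ∑ i, ξ i ^ 2) :
    ∀ ξ : Fin 3 → ℝ, ∑ i, ∑ j, ξ i * (M i j).im * ξ j ≤ 0 :=
  im_polarization_tensor_nonpos_general ε₀ hε₀ εₘ hre him c hc γ hγ hγc M hIm hRe
end

section
/- Let t, n ∈ ℝ³ be unit vectors with t·n = 0 and set b := t × n. Let t̃ ∈ ℝ³ be a unit vector with t·t̃ ≠ −1. Define ñ := (t·t̃)·n − ((b·t̃)/(1 + t·t̃))·(t × t̃) − (n·t̃)·t and b̃ := (t·t̃)·b + ((n·t̃)/(1 + t·t̃))·(t × t̃) − (b·t̃)·t. Then (t̃, ñ, b̃) is an orthonormal frame with t̃ × ñ = b̃; that is, ‖ñ‖ = ‖b̃‖ = 1, t̃·ñ = t̃·b̃ = ñ·b̃ = 0, and b̃ = t̃ × ñ. -/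
open scoped Matrix RealInnerProductSpace

/-- The cross product on `EuclideanSpace ℝ (Fin 3)`. -/
noncomputable def cross3 (x y : EuclideanSpace ℝ (Fin 3)) : EuclideanSpace ℝ (Fin 3) :=
  (WithLp.equiv 2 (Fin 3 → ℝ)).symm
    (crossProduct ((WithLp.equiv 2 (Fin 3 → ℝ)) x) ((WithLp.equiv 2 (Fin 3 → ℝ)) y))

/-!
In the orthonormal frame `(t, n, t × n)` the cross product of `ℝ³` becomes the coordinate cross
product, so everything reduces to the coordinates `τ = (c, α, β)` of `t̃`, where
`c² + α² + β² = 1`. In these coordinates `ñ = (-α, c + β² / (1 + c), -α β / (1 + c))` is a unit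
vector orthogonal to `τ`, and a direct computation gives `τ × ñ = b̃`. The remaining claims about
`b̃` then hold because the cross product completes any orthonormal pair to an orthonormal frame.
-/

section OrthonormalFamily

variable {ι : Type*} [Fintype ι]

theorem Orthonormal.inner_linearCombination {E : Type*} [NormedAddCommGroup E]
    [InnerProductSpace ℝ E] {v : ι → E} (hv : Orthonormal ℝ v) (x y : ι → ℝ) :
    ⟪Fintype.linearCombination ℝ v x, Fintype.linearCombination ℝ v y⟫ = x ⬝ᵥ y := by
  simp [Fintype.linearCombination_apply, hv.inner_sum, dotProduct]

theorem Orthonormal.linearCombination_inner {𝕜 E : Type*} [RCLike 𝕜] [NormedAddCommGroup E]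
    [InnerProductSpace 𝕜 E] [Nonempty ι] {v : ι → E} (hv : Orthonormal 𝕜 v)
    (hcard : Fintype.card ι = Module.finrank 𝕜 E) (x : E) :
    Fintype.linearCombination 𝕜 v (fun i ↦ inner 𝕜 (v i) x) = x := by
  have h := ((basisOfOrthonormalOfCardEqFinrank hv hcard).toOrthonormalBasis
    (by rwa [coe_basisOfOrthonormalOfCardEqFinrank])).sum_repr' x
  rwa [Module.Basis.coe_toOrthonormalBasis, coe_basisOfOrthonormalOfCardEqFinrank] at h

end OrthonormalFamily

local notation "ℝ³" => EuclideanSpace ℝ (Fin 3)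

section Cross3

theorem ofLp_cross3 (x y : ℝ³) : (cross3 x y).ofLp = x.ofLp ⨯₃ y.ofLp := rfl

theorem real_inner_eq_dotProduct (x y : ℝ³) : ⟪x, y⟫ = x.ofLp ⬝ᵥ y.ofLp := by
  simp [EuclideanSpace.inner_eq_star_dotProduct, dotProduct_comm]

theorem cross3_anticomm (x y : ℝ³) : cross3 x y = -cross3 y x :=
  WithLp.ofLp_injective 2 <| by
    rw [WithLp.ofLp_neg, ofLp_cross3, ofLp_cross3, cross_anticomm]

theorem cross3_self (x : ℝ³) : cross3 x x = 0 :=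
  WithLp.ofLp_injective 2 <| by simp [ofLp_cross3]

theorem cross3_add_left (x y z : ℝ³) : cross3 (x + y) z = cross3 x z + cross3 y z :=
  WithLp.ofLp_injective 2 <| by simp [ofLp_cross3]

theorem cross3_add_right (x y z : ℝ³) : cross3 x (y + z) = cross3 x y + cross3 x z :=
  WithLp.ofLp_injective 2 <| by simp [ofLp_cross3]

theorem cross3_smul_left (r : ℝ) (x y : ℝ³) : cross3 (r • x) y = r • cross3 x y :=
  WithLp.ofLp_injective 2 <| by simp [ofLp_cross3]

theorem cross3_smul_right (r : ℝ) (x y : ℝ³) : cross3 x (r • y) = r • cross3 x y :=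
  WithLp.ofLp_injective 2 <| by simp [ofLp_cross3]

theorem cross3_cross3 (x y z : ℝ³) : cross3 x (cross3 y z) = ⟪x, z⟫ • y - ⟪y, x⟫ • z :=
  WithLp.ofLp_injective 2 <| by
    simp [ofLp_cross3, real_inner_eq_dotProduct, cross_cross_eq_smul_sub_smul']

theorem inner_cross3_self_left (x y : ℝ³) : ⟪x, cross3 x y⟫ = 0 := by
  simp [ofLp_cross3, real_inner_eq_dotProduct, dot_self_cross]

theorem inner_cross3_self_right (x y : ℝ³) : ⟪y, cross3 x y⟫ = 0 := by
  simp [ofLp_cross3, real_inner_eq_dotProduct, dot_cross_self]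

theorem inner_cross3_cross3 (w x y z : ℝ³) :
    ⟪cross3 w x, cross3 y z⟫ = ⟪w, y⟫ * ⟪x, z⟫ - ⟪w, z⟫ * ⟪x, y⟫ := by
  simp [ofLp_cross3, real_inner_eq_dotProduct, cross_dot_cross]

theorem norm_cross3_sq (x y : ℝ³) : ‖cross3 x y‖ ^ 2 = ‖x‖ ^ 2 * ‖y‖ ^ 2 - ⟪x, y⟫ ^ 2 := by
  simp only [← real_inner_self_eq_norm_sq, inner_cross3_cross3, real_inner_comm y x]
  ring

theorem orthonormal_cross3 {x y : ℝ³} (hx : ‖x‖ = 1) (hy : ‖y‖ = 1) (hxy : ⟪x, y⟫ = 0) :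
    Orthonormal ℝ ![x, y, cross3 x y] := by
  have hcross : ‖cross3 x y‖ = 1 :=
    (pow_left_inj₀ (norm_nonneg _) zero_le_one two_ne_zero).1 <| by
      rw [norm_cross3_sq, hx, hy, hxy]; norm_num
  rw [orthonormal_iff_ite]
  intro i j
  fin_cases i <;> fin_cases j <;>
    simp [hx, hy, hcross, hxy, real_inner_comm x, real_inner_comm y, inner_cross3_self_left,
      inner_cross3_self_right]

end Cross3

/- `ñ` and `b̃` of (4.8b)–(4.8c) in the coordinates of the frame `(t, n, t × n)`, where `τ` are
the coordinates of `t̃`. -/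
noncomputable def perturbedNormal (τ : Fin 3 → ℝ) : Fin 3 → ℝ :=
  τ 0 • ![0, 1, 0] - (τ 2 / (1 + τ 0)) • (![1, 0, 0] ⨯₃ τ) - τ 1 • ![1, 0, 0]

noncomputable def perturbedBinormal (τ : Fin 3 → ℝ) : Fin 3 → ℝ :=
  τ 0 • ![0, 0, 1] + (τ 1 / (1 + τ 0)) • (![1, 0, 0] ⨯₃ τ) - τ 2 • ![1, 0, 0]

section Coordinates

open Matrix

theorem perturbedNormal_eq (τ : Fin 3 → ℝ) :
    perturbedNormal τ = ![-τ 1, τ 0 + τ 2 ^ 2 / (1 + τ 0), -(τ 1 * τ 2) / (1 + τ 0)] := by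
  rw [perturbedNormal, cross_apply]
  simp only [smul_vec3, cons_sub_cons, empty_sub_empty, cons_val_zero, cons_val_one,
    cons_val_two, tail_cons, head_cons]
  refine vec3_eq ?_ ?_ ?_ <;> ring

theorem perturbedBinormal_eq (τ : Fin 3 → ℝ) :
    perturbedBinormal τ = ![-τ 2, -(τ 1 * τ 2) / (1 + τ 0), τ 0 + τ 1 ^ 2 / (1 + τ 0)] := by
  rw [perturbedBinormal, cross_apply]
  simp only [smul_vec3, vec3_add, cons_sub_cons, empty_sub_empty, cons_val_zero, cons_val_one,
    cons_val_two, tail_cons, head_cons]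
  refine vec3_eq ?_ ?_ ?_ <;> ring

theorem dotProduct_perturbedNormal (τ : Fin 3 → ℝ) : τ ⬝ᵥ perturbedNormal τ = 0 := by
  rw [perturbedNormal_eq, vec3_dotProduct]
  simp only [cons_val_zero, cons_val_one, cons_val_two, tail_cons, head_cons]
  ring

theorem perturbedNormal_dotProduct_self {τ : Fin 3 → ℝ} (hτ : τ ⬝ᵥ τ = 1) (h0 : 1 + τ 0 ≠ 0) :
    perturbedNormal τ ⬝ᵥ perturbedNormal τ = 1 := by
  rw [vec3_dotProduct] at hτ
  rw [perturbedNormal_eq, vec3_dotProduct']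
  field_simp
  linear_combination (τ 2 ^ 2 + (1 + τ 0) ^ 2) * hτ

theorem cross_perturbedNormal {τ : Fin 3 → ℝ} (hτ : τ ⬝ᵥ τ = 1) (h0 : 1 + τ 0 ≠ 0) :
    τ ⨯₃ perturbedNormal τ = perturbedBinormal τ := by
  rw [vec3_dotProduct] at hτ
  rw [perturbedNormal_eq, perturbedBinormal_eq, cross_apply]
  refine vec3_eq ?_ ?_ ?_ <;>
    simp only [cons_val_zero, cons_val_one, cons_val_two, tail_cons, head_cons] <;> field_simp
  · linear_combination (-τ 2) * hτ
  · ring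
  · linear_combination τ 0 * hτ

end Coordinates

section Frame

noncomputable def frame (t n : ℝ³) : (Fin 3 → ℝ) →ₗ[ℝ] ℝ³ :=
  Fintype.linearCombination ℝ ![t, n, cross3 t n]

noncomputable def frameCoords (t n x : ℝ³) : Fin 3 → ℝ := fun i ↦ ⟪![t, n, cross3 t n] i, x⟫

theorem frame_apply (t n : ℝ³) (u : Fin 3 → ℝ) :
    frame t n u = u 0 • t + u 1 • n + u 2 • cross3 t n := by
  simp [frame, Fintype.linearCombination_apply, Fin.sum_univ_three, add_assoc]

variable {t n : ℝ³}

theorem inner_frame (ht : ‖t‖ = 1) (hn : ‖n‖ = 1) (htn : ⟪t, n⟫ = 0) (u w : Fin 3 → ℝ) :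
    ⟪frame t n u, frame t n w⟫ = u ⬝ᵥ w :=
  (orthonormal_cross3 ht hn htn).inner_linearCombination u w

theorem frame_frameCoords (ht : ‖t‖ = 1) (hn : ‖n‖ = 1) (htn : ⟪t, n⟫ = 0) (x : ℝ³) :
    frame t n (frameCoords t n x) = x :=
  (orthonormal_cross3 ht hn htn).linearCombination_inner (by simp) x

theorem cross3_frame (ht : ‖t‖ = 1) (hn : ‖n‖ = 1) (htn : ⟪t, n⟫ = 0) (u w : Fin 3 → ℝ) :
    cross3 (frame t n u) (frame t n w) = frame t n (u ⨯₃ w) := by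
  have htb : cross3 t (cross3 t n) = -n := by
    rw [cross3_cross3, htn, real_inner_self_eq_norm_sq, ht]; simp
  have hnb : cross3 n (cross3 t n) = t := by
    rw [cross3_cross3, real_inner_comm, htn, real_inner_self_eq_norm_sq, hn]; simp
  simp only [frame_apply, cross_apply, cross3_add_left, cross3_add_right, cross3_smul_left,
    cross3_smul_right, cross3_self, cross3_anticomm n t, cross3_anticomm (cross3 t n), htb, hnb,
    smul_zero, smul_neg, neg_neg, smul_add, zero_add, add_zero, Matrix.cons_val_zero,
    Matrix.cons_val_one, Matrix.cons_val]
  module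

theorem frame_perturbedNormal (ht : ‖t‖ = 1) (hn : ‖n‖ = 1) (htn : ⟪t, n⟫ = 0) (t' : ℝ³) :
    frame t n (perturbedNormal (frameCoords t n t')) =
      ⟪t, t'⟫ • n - (⟪cross3 t n, t'⟫ / (1 + ⟪t, t'⟫)) • cross3 t t' - ⟪n, t'⟫ • t := by
  have he₀ : frame t n ![1, 0, 0] = t := by simp [frame_apply]
  have he₁ : frame t n ![0, 1, 0] = n := by simp [frame_apply]
  rw [perturbedNormal, map_sub, map_sub, map_smul, map_smul, map_smul, he₀, he₁,
    ← cross3_frame ht hn htn, he₀, frame_frameCoords ht hn htn]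
  rfl

theorem frame_perturbedBinormal (ht : ‖t‖ = 1) (hn : ‖n‖ = 1) (htn : ⟪t, n⟫ = 0) (t' : ℝ³) :
    frame t n (perturbedBinormal (frameCoords t n t')) =
      ⟪t, t'⟫ • cross3 t n + (⟪n, t'⟫ / (1 + ⟪t, t'⟫)) • cross3 t t' - ⟪cross3 t n, t'⟫ • t := by
  have he₀ : frame t n ![1, 0, 0] = t := by simp [frame_apply]
  have he₂ : frame t n ![0, 0, 1] = cross3 t n := by simp [frame_apply]
  rw [perturbedBinormal, map_sub, map_add, map_smul, map_smul, map_smul, he₀, he₂,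
    ← cross3_frame ht hn htn, he₀, frame_frameCoords ht hn htn]
  rfl

end Frame

/-- The perturbed frame `(t̃, ñ, b̃)` of formulas (4.8a)–(4.8c) built from an
orthonormal frame `(t, n, b)` and the perturbed unit tangent `t̃` is again an
orthonormal frame with `t̃ × ñ = b̃`. -/
theorem perturbed_frame_orthonormal
    (t n : EuclideanSpace ℝ (Fin 3)) (htu : ‖t‖ = 1) (hnu : ‖n‖ = 1)
    (htn : ⟪t, n⟫ = 0) (b : EuclideanSpace ℝ (Fin 3)) (hb : b = cross3 t n)
    (t' : EuclideanSpace ℝ (Fin 3)) (ht'u : ‖t'‖ = 1) (htt' : ⟪t, t'⟫ ≠ -1)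
    (n' b' : EuclideanSpace ℝ (Fin 3))
    (hn' : n' = ⟪t, t'⟫ • n - (⟪b, t'⟫ / (1 + ⟪t, t'⟫)) • cross3 t t' - ⟪n, t'⟫ • t)
    (hb' : b' = ⟪t, t'⟫ • b + (⟪n, t'⟫ / (1 + ⟪t, t'⟫)) • cross3 t t' - ⟪b, t'⟫ • t) :
    ‖n'‖ = 1 ∧ ‖b'‖ = 1 ∧ ⟪t', n'⟫ = 0 ∧ ⟪t', b'⟫ = 0 ∧ ⟪n', b'⟫ = 0 ∧
      b' = cross3 t' n' := by
  subst hb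
  rw [← frame_perturbedNormal htu hnu htn] at hn'
  rw [← frame_perturbedBinormal htu hnu htn] at hb'
  set τ := frameCoords t n t'
  have ht' : frame t n τ = t' := frame_frameCoords htu hnu htn t'
  have hτ : τ ⬝ᵥ τ = 1 := by
    rw [← inner_frame htu hnu htn, ht', real_inner_self_eq_norm_sq, ht'u, one_pow]
  have h0 : 1 + τ 0 ≠ 0 := fun h ↦ htt' (eq_neg_of_add_eq_zero_right h)
  have hn'u : ‖n'‖ = 1 := by
    rw [norm_eq_sqrt_real_inner, hn', inner_frame htu hnu htn,
      perturbedNormal_dotProduct_self hτ h0, Real.sqrt_one]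
  have ht'n' : ⟪t', n'⟫ = 0 := by
    rw [← ht', hn', inner_frame htu hnu htn, dotProduct_perturbedNormal]
  have hb'_eq : b' = cross3 t' n' := by
    rw [hb', hn', ← cross_perturbedNormal hτ h0, ← cross3_frame htu hnu htn, ht']
  have hframe' := orthonormal_cross3 ht'u hn'u ht'n'
  rw [← hb'_eq] at hframe'
  exact ⟨hn'u, by simpa using hframe'.1 2, ht'n',
    by simpa using hframe'.2 (by decide : (0 : Fin 3) ≠ 2),
    by simpa using hframe'.2 (by decide : (1 : Fin 3) ≠ 2), hb'_eq⟩
end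

section
/- Let n ≥ 1, let F be a complex n×n matrix, and let P be a complex n×n matrix with P* = P and P² = P; set Q := 1 − P. Then ( ( ‖PFP‖_F − ‖QFQ‖_F )² + ( ‖QFP‖_F − ‖PFQ‖_F )² )^{1/2} ≤ ‖F‖_F. -/
/-!
The four blocks `P F P`, `P F Q`, `Q F P`, `Q F Q` split `F` orthogonally, so their squared
Frobenius norms `a², d², c², b²` add up to `‖F‖²`. Since all four norms are nonnegative,
`(a - b)² + (c - d)² ≤ a² + b² + c² + d² = ‖F‖²`.
-/

open BigOperators Finset

/-- The Frobenius norm of a complex `n × n` matrix. -/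
noncomputable def frobeniusNorm' {n : ℕ} (A : Matrix (Fin n) (Fin n) ℂ) : ℝ :=
  Real.sqrt (∑ i, ∑ j, ‖A i j‖ ^ 2)

open scoped Matrix.Norms.Frobenius

namespace Matrix

variable {m n 𝕜 : Type*} [Fintype m] [Fintype n] [RCLike 𝕜]

theorem frobenius_norm_sq_eq_re_trace (A : Matrix m n 𝕜) :
    ‖A‖ ^ 2 = RCLike.re (Aᴴ * A).trace := by
  rw [frobenius_norm_def, ← Real.rpow_natCast, ← Real.rpow_mul (by positivity)]
  simp only [trace, diag, mul_apply, conjTranspose_apply, map_sum, RCLike.star_def,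
    RCLike.conj_mul]
  norm_num [Finset.sum_comm (γ := m)]

theorem frobenius_norm_sq_mul_add_one_sub_mul [DecidableEq m] {P : Matrix m m 𝕜}
    (hP : IsStarProjection P) (A : Matrix m n 𝕜) :
    ‖P * A‖ ^ 2 + ‖(1 - P) * A‖ ^ 2 = ‖A‖ ^ 2 := by
  have hPsa : Pᴴ = P := hP.isSelfAdjoint
  have hQsa : (1 - P)ᴴ = 1 - P := hP.one_sub.isSelfAdjoint
  have hPidem : P * P = P := hP.isIdempotentElem
  have hQidem : (1 - P) * (1 - P) = 1 - P := hP.one_sub.isIdempotentElem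
  simp only [frobenius_norm_sq_eq_re_trace, ← map_add, ← trace_add, conjTranspose_mul,
    hPsa, hQsa]
  congr 3
  calc Aᴴ * P * (P * A) + Aᴴ * (1 - P) * ((1 - P) * A)
      = Aᴴ * ((P * P + (1 - P) * (1 - P)) * A) := by
        simp only [Matrix.mul_assoc, Matrix.add_mul, Matrix.mul_add]
    _ = Aᴴ * A := by rw [hPidem, hQidem, add_sub_cancel, Matrix.one_mul]

theorem frobenius_norm_sq_mul_add_mul_one_sub [DecidableEq n] {P : Matrix n n 𝕜}
    (hP : IsStarProjection P) (A : Matrix m n 𝕜) :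
    ‖A * P‖ ^ 2 + ‖A * (1 - P)‖ ^ 2 = ‖A‖ ^ 2 := by
  have hPsa : Pᴴ = P := hP.isSelfAdjoint
  have hQsa : (1 - P)ᴴ = 1 - P := hP.one_sub.isSelfAdjoint
  rw [← frobenius_norm_conjTranspose (A * P), ← frobenius_norm_conjTranspose (A * (1 - P)),
    ← frobenius_norm_conjTranspose A, conjTranspose_mul, conjTranspose_mul, hPsa, hQsa]
  exact frobenius_norm_sq_mul_add_one_sub_mul hP Aᴴ

theorem frobenius_norm_sq_eq_sum_sq_blocks [DecidableEq m] [DecidableEq n] {P : Matrix m m 𝕜}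
    {R : Matrix n n 𝕜} (hP : IsStarProjection P) (hR : IsStarProjection R) (A : Matrix m n 𝕜) :
    ‖P * A * R‖ ^ 2 + ‖P * A * (1 - R)‖ ^ 2 +
        (‖(1 - P) * A * R‖ ^ 2 + ‖(1 - P) * A * (1 - R)‖ ^ 2) = ‖A‖ ^ 2 := by
  rw [frobenius_norm_sq_mul_add_mul_one_sub hR, frobenius_norm_sq_mul_add_mul_one_sub hR,
    frobenius_norm_sq_mul_add_one_sub_mul hP]

end Matrix

theorem frobeniusNorm'_eq_norm {n : ℕ} (A : Matrix (Fin n) (Fin n) ℂ) :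
    frobeniusNorm' A = ‖A‖ := by
  rw [frobeniusNorm', Matrix.frobenius_norm_def, Real.sqrt_eq_rpow]
  norm_cast

theorem chiHS_le_frobenius_norm_general
    (n : ℕ)
    (F P : Matrix (Fin n) (Fin n) ℂ)
    (hPsa : P.conjTranspose = P) (hPproj : P * P = P)
    (Q : Matrix (Fin n) (Fin n) ℂ) (hQ : Q = 1 - P) :
    Real.sqrt ((frobeniusNorm' (P * F * P) - frobeniusNorm' (Q * F * Q)) ^ 2 +
        (frobeniusNorm' (Q * F * P) - frobeniusNorm' (P * F * Q)) ^ 2) ≤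
      frobeniusNorm' F := by
  subst hQ
  have hP : IsStarProjection P := ⟨hPproj, hPsa⟩
  have hblocks := Matrix.frobenius_norm_sq_eq_sum_sq_blocks hP hP F
  simp only [frobeniusNorm'_eq_norm]
  refine Real.sqrt_le_iff.mpr ⟨norm_nonneg F, ?_⟩
  nlinarith [mul_nonneg (norm_nonneg (P * F * P)) (norm_nonneg ((1 - P) * F * (1 - P))),
    mul_nonneg (norm_nonneg ((1 - P) * F * P)) (norm_nonneg (P * F * (1 - P)))]

/-- The chirality measure bound `χ_HS(F) ≤ ‖F‖_HS` of (3.7): the smooth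
electromagnetic chirality measure of `F` with respect to the orthogonal
projections `P` and `Q = 1 − P` is at most the Frobenius norm of `F`. -/
theorem chiHS_le_frobenius_norm
    (n : ℕ) (hn : 1 ≤ n)
    (F P : Matrix (Fin n) (Fin n) ℂ)
    (hPsa : P.conjTranspose = P) (hPproj : P * P = P)
    (Q : Matrix (Fin n) (Fin n) ℂ) (hQ : Q = 1 - P) :
    Real.sqrt ((frobeniusNorm' (P * F * P) - frobeniusNorm' (Q * F * Q)) ^ 2 +
        (frobeniusNorm' (Q * F * P) - frobeniusNorm' (P * F * Q)) ^ 2) ≤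
      frobeniusNorm' F :=
  chiHS_le_frobenius_norm_general n F P hPsa hPproj Q hQ
end

section
/- Let L > 0, let x̂ ∈ ℝ³ be a unit vector, let k > 0, and let Π be the complex 3×3 matrix representing the map v ↦ (x̂ × v) × x̂ = v − (x̂·v)·x̂ (extended complex-linearly). Let p, h : [0, L] → ℝ³ be continuously differentiable with p′(t) ≠ 0 for all t ∈ [0, L], let M, M′ : [0, L] → ℂ^{3×3} be continuous, and let E : ℝ³ → ℂ³ be continuously differentiable with derivative DE. Then the ℂ³-valued function g(s) := ∫₀^L e^{−ik x̂·(p(t)+s h(t))} Π (M(t) + s M′(t)) E(p(t)+s h(t)) ‖p′(t)+s h′(t)‖ dt is differentiable at s = 0 with g′(0) = −∫₀^L ik (x̂·h) e^{−ik x̂·p} Π M E(p) ‖p′‖ dt + ∫₀^L e^{−ik x̂·p} Π M′ E(p) ‖p′‖ dt + ∫₀^L e^{−ik x̂·p} Π M (DE(p)h) ‖p′‖ dt + ∫₀^L e^{−ik x̂·p} Π M E(p) (p′·h′)/‖p′‖ dt (all integrands evaluated at t). -/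
/-!
Differentiate under the integral sign. Since `p'` does not vanish on the compact interval, the
perturbed tangent `p' + s • h'` stays away from zero for `|s| ≤ ε`; on the rectangle
`[-ε, ε] × [0, L]` the `s`-derivative of the integrand is then jointly continuous, hence bounded,
which provides the domination. That derivative is the product rule applied to the phase, the
arc length element and the field `Π (M + s M') E(p + s h)`, and at `s = 0` it splits into the four
terms.
-/

open BigOperators Finset intervalIntegral
open scoped Matrix RealInnerProductSpace
open Set Metric MeasureTheory

theorem HasDerivAt.norm {F : Type*} [NormedAddCommGroup F] [InnerProductSpace ℝ F]
    {f : ℝ → F} {f' : F} {x : ℝ} (hf : HasDerivAt f f' x) (h0 : f x ≠ 0) :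
    HasDerivAt (fun y => ‖f y‖) (⟪f x, f'⟫ / ‖f x‖) x := by
  have hsq : ‖f x‖ ^ 2 ≠ 0 := pow_ne_zero 2 (norm_ne_zero_iff.2 h0)
  have := hf.norm_sq.sqrt hsq
  simp only [Real.sqrt_sq (norm_nonneg _)] at this
  exact this.congr_deriv (mul_div_mul_left _ _ two_ne_zero)

theorem HasDerivAt.const_mulVec {𝕜 : Type*} [RCLike 𝕜] {m n : Type*} [Fintype m] [Fintype n]
    (A : Matrix m n 𝕜) {v : ℝ → n → 𝕜} {v' : n → 𝕜} {x : ℝ} (hv : HasDerivAt v v' x) :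
    HasDerivAt (fun s => A *ᵥ v s) (A *ᵥ v') x :=
  (LinearMap.toContinuousLinearMap ((Matrix.mulVecLin A).restrictScalars ℝ)).hasFDerivAt
    |>.comp_hasDerivAt x hv

theorem HasDerivAt.add_smul_mulVec {𝕜 : Type*} [RCLike 𝕜] {m n : Type*} [Fintype m] [Fintype n]
    (A B : Matrix m n 𝕜) {v : ℝ → n → 𝕜} {v' : n → 𝕜} {x : ℝ} (hv : HasDerivAt v v' x) :
    HasDerivAt (fun s => (A + s • B) *ᵥ v s) (B *ᵥ v x + (A + x • B) *ᵥ v') x := by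
  have hsplit : (fun s : ℝ => (A + s • B) *ᵥ v s) = fun s => A *ᵥ v s + s • B *ᵥ v s := by
    ext1 s
    rw [Matrix.add_mulVec, Matrix.smul_mulVec]
  rw [hsplit]
  refine ((hv.const_mulVec A).add ((hasDerivAt_id' x).smul (hv.const_mulVec B))).congr_deriv ?_
  rw [Matrix.add_mulVec, Matrix.smul_mulVec, one_smul]
  abel

theorem IsCompact.exists_pos_forall_add_smul_ne_zero {X F : Type*} [TopologicalSpace X]
    [NormedAddCommGroup F] [NormedSpace ℝ F] {K : Set X} (hK : IsCompact K) {u v : X → F}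
    (hu : ContinuousOn u K) (hv : ContinuousOn v K) (hu0 : ∀ x ∈ K, u x ≠ 0) :
    ∃ ε > 0, ∀ s ∈ closedBall (0 : ℝ) ε, ∀ x ∈ K, u x + s • v x ≠ 0 := by
  obtain ⟨m, hm, hmu⟩ := hK.exists_forall_le' hu.norm fun x hx => norm_pos_iff.2 (hu0 x hx)
  obtain ⟨C, hC⟩ := hK.exists_bound_of_continuousOn hv
  have hC1 : 0 < |C| + 1 := by positivity
  refine ⟨m / (|C| + 1), div_pos hm hC1, fun s hs x hx => ?_⟩
  rw [mem_closedBall_zero_iff] at hs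
  have hsv : ‖s • v x‖ < m := calc
    ‖s • v x‖ = ‖s‖ * ‖v x‖ := norm_smul s (v x)
    _ ≤ m / (|C| + 1) * |C| :=
      mul_le_mul hs ((hC x hx).trans (le_abs_self C)) (norm_nonneg _) (by positivity)
    _ < m := by rw [div_mul_eq_mul_div, div_lt_iff₀ hC1]; linarith
  have htri := norm_sub_le (u x + s • v x) (s • v x)
  rw [add_sub_cancel_right] at htri
  rw [← norm_pos_iff]
  linarith [hmu x hx]

theorem ContinuousOn.comp_snd_prod {α β γ : Type*} [TopologicalSpace α] [TopologicalSpace β]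
    [TopologicalSpace γ] {f : β → γ} {s : Set α} {t : Set β} (hf : ContinuousOn f t) :
    ContinuousOn (fun z : α × β => f z.2) (s ×ˢ t) :=
  hf.comp continuousOn_snd fun _ hz => hz.2

theorem intervalIntegral.hasDerivAt_integral_of_continuousOn {G : Type*} [NormedAddCommGroup G]
    [NormedSpace ℝ G] {F F' : ℝ → ℝ → G} {a b s₀ ε : ℝ} (hε : 0 < ε)
    (hF : ∀ s ∈ ball s₀ ε, ContinuousOn (F s) (uIcc a b))
    (hF' : ContinuousOn (Function.uncurry F') (closedBall s₀ ε ×ˢ uIcc a b))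
    (hderiv : ∀ s ∈ ball s₀ ε, ∀ t ∈ uIcc a b, HasDerivAt (F · t) (F' s t) s) :
    HasDerivAt (fun s => ∫ t in a..b, F s t) (∫ t in a..b, F' s₀ t) s₀ := by
  obtain ⟨C, hC⟩ :=
    ((isCompact_closedBall s₀ ε).prod isCompact_uIcc).exists_bound_of_continuousOn hF'
  have hF's₀ : ContinuousOn (F' s₀) (uIcc a b) := hF'.uncurry_left s₀ (mem_closedBall_self hε.le)
  refine (hasDerivAt_integral_of_dominated_loc_of_deriv_le (bound := fun _ => C)
    (ball_mem_nhds s₀ hε) ?_ (hF s₀ (mem_ball_self hε)).intervalIntegrable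
    ((hF's₀.mono uIoc_subset_uIcc).aestronglyMeasurable measurableSet_uIoc) ?_
    intervalIntegrable_const ?_).2
  · filter_upwards [ball_mem_nhds s₀ hε] with s hs
    exact ((hF s hs).mono uIoc_subset_uIcc).aestronglyMeasurable measurableSet_uIoc
  · exact ae_of_all _ fun t ht s hs => hC (s, t) ⟨ball_subset_closedBall hs, uIoc_subset_uIcc ht⟩
  · exact ae_of_all _ fun t ht s hs => hderiv s hs t (uIoc_subset_uIcc ht)

section FarField

variable {V : Type*} [NormedAddCommGroup V] [InnerProductSpace ℝ V] {n : Type*} [Fintype n]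
  (xh : V) (k : ℝ) (Pi3 : Matrix n n ℂ) (E : V → n → ℂ)

/-- The far-field integrand of the wire `p + s • h` at one curve parameter `t`, written through
`P = p t`, `H = h t`, `P' = p' t`, `H' = h' t` and the polarization tensors `A = M t`,
`B = M' t`. -/
noncomputable def farFieldIntegrand (P H P' H' : V) (A B : Matrix n n ℂ) (s : ℝ) : n → ℂ :=
  (Complex.exp (-Complex.I * k * ((⟪xh, P + s • H⟫ : ℝ) : ℂ)) * ((‖P' + s • H'‖ : ℝ) : ℂ)) •
    Pi3 *ᵥ ((A + s • B) *ᵥ E (P + s • H))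

noncomputable def farFieldIntegrandDeriv (P H P' H' : V) (A B : Matrix n n ℂ) (s : ℝ) : n → ℂ :=
  (Complex.exp (-Complex.I * k * ((⟪xh, P + s • H⟫ : ℝ) : ℂ)) * ((‖P' + s • H'‖ : ℝ) : ℂ)) •
      Pi3 *ᵥ (B *ᵥ E (P + s • H) + (A + s • B) *ᵥ fderiv ℝ E (P + s • H) H) +
    (Complex.exp (-Complex.I * k * ((⟪xh, P + s • H⟫ : ℝ) : ℂ)) *
          (-Complex.I * k * ((⟪xh, H⟫ : ℝ) : ℂ)) * ((‖P' + s • H'‖ : ℝ) : ℂ) +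
        Complex.exp (-Complex.I * k * ((⟪xh, P + s • H⟫ : ℝ) : ℂ)) *
          ((⟪P' + s • H', H'⟫ / ‖P' + s • H'‖ : ℝ) : ℂ)) •
      Pi3 *ᵥ ((A + s • B) *ᵥ E (P + s • H))

variable {xh k Pi3 E}

theorem hasDerivAt_farFieldIntegrand {P H P' H' : V} {A B : Matrix n n ℂ} {s : ℝ}
    (hE : DifferentiableAt ℝ E (P + s • H)) (hne : P' + s • H' ≠ 0) :
    HasDerivAt (farFieldIntegrand xh k Pi3 E P H P' H' A B)
      (farFieldIntegrandDeriv xh k Pi3 E P H P' H' A B s) s := by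
  have hline : ∀ X Y : V, HasDerivAt (fun y : ℝ => X + y • Y) Y s := fun X Y => by
    simpa using ((hasDerivAt_id s).smul_const Y).const_add X
  have hinner : HasDerivAt (fun y : ℝ => ⟪xh, P + y • H⟫) ⟪xh, H⟫ s := by
    simpa using (hasDerivAt_const s xh).inner ℝ (hline P H)
  have hphase := (hinner.ofReal_comp.const_mul (-Complex.I * k)).cexp
  have hlen := ((hline P' H').norm hne).ofReal_comp
  have hfield :=
    ((hE.hasFDerivAt.comp_hasDerivAt s (hline P H)).add_smul_mulVec A B).const_mulVec Pi3
  exact (hphase.mul hlen).smul hfield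

section Continuity

variable {X : Type*} [TopologicalSpace X] {S : Set X} {s : X → ℝ} {P H P' H' : X → V}
  {A B : X → Matrix n n ℂ}

theorem ContinuousOn.farFieldIntegrand (hE : Continuous E) (hs : ContinuousOn s S)
    (hP : ContinuousOn P S) (hH : ContinuousOn H S) (hP' : ContinuousOn P' S)
    (hH' : ContinuousOn H' S) (hA : ContinuousOn A S) (hB : ContinuousOn B S) :
    ContinuousOn (fun x => farFieldIntegrand xh k Pi3 E (P x) (H x) (P' x) (H' x) (A x) (B x) (s x))
      S := by
  unfold _root_.farFieldIntegrand
  fun_prop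

theorem ContinuousOn.farFieldIntegrandDeriv (hE : ContDiff ℝ 1 E) (hs : ContinuousOn s S)
    (hP : ContinuousOn P S) (hH : ContinuousOn H S) (hP' : ContinuousOn P' S)
    (hH' : ContinuousOn H' S) (hA : ContinuousOn A S) (hB : ContinuousOn B S)
    (hne : ∀ x ∈ S, P' x + s x • H' x ≠ 0) :
    ContinuousOn
      (fun x => farFieldIntegrandDeriv xh k Pi3 E (P x) (H x) (P' x) (H' x) (A x) (B x) (s x))
      S := by
  have hE₀ := hE.continuous
  have hE₁ := hE.continuous_fderiv one_ne_zero
  have hnorm : ∀ x ∈ S, ‖P' x + s x • H' x‖ ≠ 0 := fun x hx => norm_ne_zero_iff.2 (hne x hx)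
  unfold _root_.farFieldIntegrandDeriv
  fun_prop (disch := assumption)

end Continuity

theorem farFieldIntegrandDeriv_zero (P H P' H' : V) (A B : Matrix n n ℂ) :
    farFieldIntegrandDeriv xh k Pi3 E P H P' H' A B 0 =
      (-(Complex.I * k * ((⟪xh, H⟫ : ℝ) : ℂ)) * Complex.exp (-Complex.I * k * ((⟪xh, P⟫ : ℝ) : ℂ)) *
          ((‖P'‖ : ℝ) : ℂ)) • Pi3 *ᵥ (A *ᵥ E P) +
        (Complex.exp (-Complex.I * k * ((⟪xh, P⟫ : ℝ) : ℂ)) * ((‖P'‖ : ℝ) : ℂ)) •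
          Pi3 *ᵥ (B *ᵥ E P) +
        (Complex.exp (-Complex.I * k * ((⟪xh, P⟫ : ℝ) : ℂ)) * ((‖P'‖ : ℝ) : ℂ)) •
          Pi3 *ᵥ (A *ᵥ fderiv ℝ E P H) +
        (Complex.exp (-Complex.I * k * ((⟪xh, P⟫ : ℝ) : ℂ)) * ((⟪P', H'⟫ / ‖P'‖ : ℝ) : ℂ)) •
          Pi3 *ᵥ (A *ᵥ E P) := by
  simp only [farFieldIntegrandDeriv, zero_smul, add_zero, Matrix.mulVec_add, smul_add]
  module

theorem integral_farFieldIntegrandDeriv_zero {a b : ℝ} {p h p' h' : ℝ → V} {M M' : ℝ → Matrix n n ℂ}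
    (hE : ContDiff ℝ 1 E) (hp : ContinuousOn p (uIcc a b)) (hh : ContinuousOn h (uIcc a b))
    (hp' : ContinuousOn p' (uIcc a b)) (hh' : ContinuousOn h' (uIcc a b))
    (hM : ContinuousOn M (uIcc a b)) (hM' : ContinuousOn M' (uIcc a b))
    (hp'0 : ∀ t ∈ uIcc a b, p' t ≠ 0) :
    ∫ t in a..b, farFieldIntegrandDeriv xh k Pi3 E (p t) (h t) (p' t) (h' t) (M t) (M' t) 0 =
      (∫ t in a..b, (-(Complex.I * k * ((⟪xh, h t⟫ : ℝ) : ℂ)) *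
          Complex.exp (-Complex.I * k * ((⟪xh, p t⟫ : ℝ) : ℂ)) * ((‖p' t‖ : ℝ) : ℂ)) •
        Pi3 *ᵥ (M t *ᵥ E (p t))) +
      (∫ t in a..b, (Complex.exp (-Complex.I * k * ((⟪xh, p t⟫ : ℝ) : ℂ)) * ((‖p' t‖ : ℝ) : ℂ)) •
        Pi3 *ᵥ (M' t *ᵥ E (p t))) +
      (∫ t in a..b, (Complex.exp (-Complex.I * k * ((⟪xh, p t⟫ : ℝ) : ℂ)) * ((‖p' t‖ : ℝ) : ℂ)) •
        Pi3 *ᵥ (M t *ᵥ fderiv ℝ E (p t) (h t))) +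
      (∫ t in a..b, (Complex.exp (-Complex.I * k * ((⟪xh, p t⟫ : ℝ) : ℂ)) *
          ((⟪p' t, h' t⟫ / ‖p' t‖ : ℝ) : ℂ)) •
        Pi3 *ᵥ (M t *ᵥ E (p t))) := by
  have hE₀ := hE.continuous
  have hE₁ := hE.continuous_fderiv one_ne_zero
  have hnorm : ∀ t ∈ uIcc a b, ‖p' t‖ ≠ 0 := fun t ht => norm_ne_zero_iff.2 (hp'0 t ht)
  have hint : ∀ f : ℝ → n → ℂ, ContinuousOn f (uIcc a b) → IntervalIntegrable f volume a b :=
    fun _ hf => hf.intervalIntegrable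
  have h₁ := hint (fun t => (-(Complex.I * k * ((⟪xh, h t⟫ : ℝ) : ℂ)) *
    Complex.exp (-Complex.I * k * ((⟪xh, p t⟫ : ℝ) : ℂ)) * ((‖p' t‖ : ℝ) : ℂ)) •
      Pi3 *ᵥ (M t *ᵥ E (p t))) (by fun_prop)
  have h₂ := hint (fun t => (Complex.exp (-Complex.I * k * ((⟪xh, p t⟫ : ℝ) : ℂ)) *
    ((‖p' t‖ : ℝ) : ℂ)) • Pi3 *ᵥ (M' t *ᵥ E (p t))) (by fun_prop)
  have h₃ := hint (fun t => (Complex.exp (-Complex.I * k * ((⟪xh, p t⟫ : ℝ) : ℂ)) *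
    ((‖p' t‖ : ℝ) : ℂ)) • Pi3 *ᵥ (M t *ᵥ fderiv ℝ E (p t) (h t))) (by fun_prop)
  have h₄ := hint (fun t => (Complex.exp (-Complex.I * k * ((⟪xh, p t⟫ : ℝ) : ℂ)) *
    ((⟪p' t, h' t⟫ / ‖p' t‖ : ℝ) : ℂ)) • Pi3 *ᵥ (M t *ᵥ E (p t)))
    (by fun_prop (disch := assumption))
  simp only [farFieldIntegrandDeriv_zero]
  rw [integral_add ((h₁.add h₂).add h₃) h₄, integral_add (h₁.add h₂) h₃,
    integral_add h₁ h₂]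

end FarField

theorem farfield_gateaux_derivative_general
    (L : ℝ) (hL : 0 < L)
    (xh : EuclideanSpace ℝ (Fin 3))
    (k : ℝ)
    (Pi3 : Matrix (Fin 3) (Fin 3) ℂ)
    (p h : ℝ → EuclideanSpace ℝ (Fin 3))
    (p' h' : ℝ → EuclideanSpace ℝ (Fin 3))
    (hp : ∀ t ∈ Set.Icc (0 : ℝ) L, HasDerivAt p (p' t) t)
    (hp'c : ContinuousOn p' (Set.Icc (0 : ℝ) L))
    (hp'0 : ∀ t ∈ Set.Icc (0 : ℝ) L, p' t ≠ 0)
    (hh : ∀ t ∈ Set.Icc (0 : ℝ) L, HasDerivAt h (h' t) t)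
    (hh'c : ContinuousOn h' (Set.Icc (0 : ℝ) L))
    (M M' : ℝ → Matrix (Fin 3) (Fin 3) ℂ)
    (hM : ContinuousOn M (Set.Icc (0 : ℝ) L))
    (hM' : ContinuousOn M' (Set.Icc (0 : ℝ) L))
    (E : EuclideanSpace ℝ (Fin 3) → Fin 3 → ℂ) (hE : ContDiff ℝ 1 E)
    (g : ℝ → Fin 3 → ℂ)
    (hg : g = fun s => ∫ t in (0 : ℝ)..L,
      (Complex.exp (-Complex.I * (k : ℂ) * ((⟪xh, p t + s • h t⟫ : ℝ) : ℂ)) *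
          ((‖p' t + s • h' t‖ : ℝ) : ℂ)) •
        Pi3.mulVec ((M t + s • M' t).mulVec (E (p t + s • h t)))) :
    HasDerivAt g
      ((∫ t in (0 : ℝ)..L,
          (-(Complex.I * (k : ℂ) * ((⟪xh, h t⟫ : ℝ) : ℂ)) *
              Complex.exp (-Complex.I * (k : ℂ) * ((⟪xh, p t⟫ : ℝ) : ℂ)) *
              ((‖p' t‖ : ℝ) : ℂ)) •
            Pi3.mulVec ((M t).mulVec (E (p t)))) +
        (∫ t in (0 : ℝ)..L,
          (Complex.exp (-Complex.I * (k : ℂ) * ((⟪xh, p t⟫ : ℝ) : ℂ)) *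
              ((‖p' t‖ : ℝ) : ℂ)) •
            Pi3.mulVec ((M' t).mulVec (E (p t)))) +
        (∫ t in (0 : ℝ)..L,
          (Complex.exp (-Complex.I * (k : ℂ) * ((⟪xh, p t⟫ : ℝ) : ℂ)) *
              ((‖p' t‖ : ℝ) : ℂ)) •
            Pi3.mulVec ((M t).mulVec (fderiv ℝ E (p t) (h t)))) +
        (∫ t in (0 : ℝ)..L,
          (Complex.exp (-Complex.I * (k : ℂ) * ((⟪xh, p t⟫ : ℝ) : ℂ)) *
              (((⟪p' t, h' t⟫ / ‖p' t‖ : ℝ)) : ℂ)) •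
            Pi3.mulVec ((M t).mulVec (E (p t)))))
      0 := by
  subst hg
  have hpc : ContinuousOn p (Icc 0 L) := fun t ht => (hp t ht).continuousAt.continuousWithinAt
  have hhc : ContinuousOn h (Icc 0 L) := fun t ht => (hh t ht).continuousAt.continuousWithinAt
  obtain ⟨ε, hε, hne⟩ := isCompact_Icc.exists_pos_forall_add_smul_ne_zero hp'c hh'c hp'0
  rw [← uIcc_of_le hL.le] at hpc hhc hp'c hh'c hM hM' hne hp'0
  have hderiv := hasDerivAt_integral_of_continuousOn
    (F := fun s t => farFieldIntegrand xh k Pi3 E (p t) (h t) (p' t) (h' t) (M t) (M' t) s)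
    (F' := fun s t => farFieldIntegrandDeriv xh k Pi3 E (p t) (h t) (p' t) (h' t) (M t) (M' t) s)
    hε (fun s _ => continuousOn_const.farFieldIntegrand hE.continuous hpc hhc hp'c hh'c hM hM')
    (continuousOn_fst.farFieldIntegrandDeriv hE hpc.comp_snd_prod hhc.comp_snd_prod
      hp'c.comp_snd_prod hh'c.comp_snd_prod hM.comp_snd_prod hM'.comp_snd_prod
      fun z hz => hne z.1 hz.1 z.2 hz.2)
    (fun s hs t ht => hasDerivAt_farFieldIntegrand (hE.differentiable one_ne_zero _)
      (hne s (ball_subset_closedBall hs) t ht))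
  exact hderiv.congr_deriv (integral_farFieldIntegrandDeriv_zero hE hpc hhc hp'c hh'c hM hM' hp'0)

/-- Theorem 4.2, directional form: the Gateaux derivative of the leading-order far
field of a thin nanowire, at a fixed observation direction `x̂`, is the sum of the
four terms accounting for the variation of the phase, of the polarization tensor,
of the incident field along the curve, and of the arc length element. -/
theorem farfield_gateaux_derivative
    (L : ℝ) (hL : 0 < L)
    (xh : EuclideanSpace ℝ (Fin 3)) (hxh : ‖xh‖ = 1)
    (k : ℝ) (hk : 0 < k)
    (Pi3 : Matrix (Fin 3) (Fin 3) ℂ)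
    (hPi3 : ∀ v : Fin 3 → ℂ,
      Pi3.mulVec v = ((fun i => (xh i : ℂ)) ⨯₃ v) ⨯₃ (fun i => (xh i : ℂ)))
    (p h : ℝ → EuclideanSpace ℝ (Fin 3))
    (p' h' : ℝ → EuclideanSpace ℝ (Fin 3))
    (hp : ∀ t ∈ Set.Icc (0 : ℝ) L, HasDerivAt p (p' t) t)
    (hp'c : ContinuousOn p' (Set.Icc (0 : ℝ) L))
    (hp'0 : ∀ t ∈ Set.Icc (0 : ℝ) L, p' t ≠ 0)
    (hh : ∀ t ∈ Set.Icc (0 : ℝ) L, HasDerivAt h (h' t) t)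
    (hh'c : ContinuousOn h' (Set.Icc (0 : ℝ) L))
    (M M' : ℝ → Matrix (Fin 3) (Fin 3) ℂ)
    (hM : ContinuousOn M (Set.Icc (0 : ℝ) L))
    (hM' : ContinuousOn M' (Set.Icc (0 : ℝ) L))
    (E : EuclideanSpace ℝ (Fin 3) → Fin 3 → ℂ) (hE : ContDiff ℝ 1 E)
    (g : ℝ → Fin 3 → ℂ)
    (hg : g = fun s => ∫ t in (0 : ℝ)..L,
      (Complex.exp (-Complex.I * (k : ℂ) * ((⟪xh, p t + s • h t⟫ : ℝ) : ℂ)) *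
          ((‖p' t + s • h' t‖ : ℝ) : ℂ)) •
        Pi3.mulVec ((M t + s • M' t).mulVec (E (p t + s • h t)))) :
    HasDerivAt g
      ((∫ t in (0 : ℝ)..L,
          (-(Complex.I * (k : ℂ) * ((⟪xh, h t⟫ : ℝ) : ℂ)) *
              Complex.exp (-Complex.I * (k : ℂ) * ((⟪xh, p t⟫ : ℝ) : ℂ)) *
              ((‖p' t‖ : ℝ) : ℂ)) •
            Pi3.mulVec ((M t).mulVec (E (p t)))) +
        (∫ t in (0 : ℝ)..L,
          (Complex.exp (-Complex.I * (k : ℂ) * ((⟪xh, p t⟫ : ℝ) : ℂ)) *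
              ((‖p' t‖ : ℝ) : ℂ)) •
            Pi3.mulVec ((M' t).mulVec (E (p t)))) +
        (∫ t in (0 : ℝ)..L,
          (Complex.exp (-Complex.I * (k : ℂ) * ((⟪xh, p t⟫ : ℝ) : ℂ)) *
              ((‖p' t‖ : ℝ) : ℂ)) •
            Pi3.mulVec ((M t).mulVec (fderiv ℝ E (p t) (h t)))) +
        (∫ t in (0 : ℝ)..L,
          (Complex.exp (-Complex.I * (k : ℂ) * ((⟪xh, p t⟫ : ℝ) : ℂ)) *
              (((⟪p' t, h' t⟫ / ‖p' t‖ : ℝ)) : ℂ)) •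
            Pi3.mulVec ((M t).mulVec (E (p t)))))
      0 :=
  farfield_gateaux_derivative_general L hL xh k Pi3 p h p' h' hp hp'c hp'0 hh hh'c M M' hM hM' E hE
    g hg
end

section
/- Let L > 0, let p : [0, L] → ℝ³ be continuously differentiable with p′(t) ≠ 0 for all t, let n, b : [0, L] → ℝ³ be continuously differentiable with ‖n(t)‖ = ‖b(t)‖ = 1 and n(t)·b(t) = 0 for all t, and let φ : [0, L] → ℝ be continuously differentiable. For s ∈ ℝ define n_s(t) := cos(s φ(t)) n(t) + sin(s φ(t)) b(t) and b_s(t) := −sin(s φ(t)) n(t) + cos(s φ(t)) b(t). Then the function g(s) := (1/L) ∫₀^L ( n_s′(t) · b_s(t) )² ‖p′(t)‖ dt is differentiable at s = 0 with g′(0) = (1/L) ∫₀^L 2 ( n′(t)·b(t) ) φ′(t) ‖p′(t)‖ dt. -/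
open BigOperators intervalIntegral
open scoped RealInnerProductSpace

/-! Rotating an orthonormal frame `(n, b)` by the angle `sφ` adds `sφ'` to its twist rate, so the
integrand of `g` is `(sφ' + ⟪n', b⟫)² ‖p'‖` and `g` is a quadratic polynomial in `s` whose linear
coefficient is `L⁻¹ ∫ 2 ⟪n', b⟫ φ' ‖p'‖`. -/

open Real Set
open scoped Interval

section Frame

variable {E : Type*} [NormedAddCommGroup E] [InnerProductSpace ℝ E]

theorem inner_add_inner_eq_zero_of_inner_eq_const {s : Set ℝ} {f g : ℝ → E} {f' g' : E}
    {t c : ℝ} (hf : HasDerivWithinAt f f' s t) (hg : HasDerivWithinAt g g' s t)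
    (hs : UniqueDiffWithinAt ℝ s t) (hfg : ∀ u ∈ s, ⟪f u, g u⟫ = c) (ht : t ∈ s) :
    ⟪f t, g'⟫ + ⟪f', g t⟫ = 0 :=
  hs.eq_deriv s (hf.inner ℝ hg) <|
    (hasDerivWithinAt_const t s c).congr (fun u hu => hfg u hu) (hfg t ht)

theorem inner_deriv_eq_zero_of_norm_eq_one {s : Set ℝ} {f : ℝ → E} {f' : E} {t : ℝ}
    (hf : HasDerivWithinAt f f' s t) (hs : UniqueDiffWithinAt ℝ s t)
    (hf1 : ∀ u ∈ s, ‖f u‖ = 1) (ht : t ∈ s) : ⟪f t, f'⟫ = 0 := by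
  have h := inner_add_inner_eq_zero_of_inner_eq_const hf hf hs (c := 1)
    (fun u hu => by rw [real_inner_self_eq_norm_sq, hf1 u hu, one_pow]) ht
  rw [real_inner_comm (f t) f'] at h
  linarith

theorem hasDerivAt_cos_smul_add_sin_smul {θ : ℝ → ℝ} {n b : ℝ → E} {θ' t : ℝ} {n' b' : E}
    (hθ : HasDerivAt θ θ' t) (hn : HasDerivAt n n' t) (hb : HasDerivAt b b' t) :
    HasDerivAt (fun u => cos (θ u) • n u + sin (θ u) • b u)
      (cos (θ t) • n' + sin (θ t) • b' + θ' • (-sin (θ t) • n t + cos (θ t) • b t)) t := by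
  convert (hθ.cos.fun_smul hn).fun_add (hθ.sin.fun_smul hb) using 1
  module

theorem inner_rotated_frame_eq {n b n' b' : E} {c s θ' : ℝ} (hcs : s ^ 2 + c ^ 2 = 1)
    (hn : ‖n‖ = 1) (hb : ‖b‖ = 1) (hnb : ⟪n, b⟫ = 0) (hnn' : ⟪n, n'⟫ = 0) (hbb' : ⟪b, b'⟫ = 0)
    (hnb' : ⟪n, b'⟫ = -⟪n', b⟫) :
    ⟪c • n' + s • b' + θ' • (-s • n + c • b), -s • n + c • b⟫ = θ' + ⟪n', b⟫ := by
  have hnn : ⟪n, n⟫ = 1 := by rw [real_inner_self_eq_norm_sq, hn, one_pow]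
  have hbb : ⟪b, b⟫ = 1 := by rw [real_inner_self_eq_norm_sq, hb, one_pow]
  simp only [inner_add_left, inner_add_right, inner_smul_left, inner_smul_right, conj_trivial]
  rw [real_inner_comm n n', real_inner_comm b b', real_inner_comm n b', real_inner_comm n b,
    hnn, hbb, hnb, hnn', hbb', hnb']
  linear_combination (θ' + ⟪n', b⟫) * hcs

theorem inner_deriv_rotated_frame_eq {s : Set ℝ} (hs : UniqueDiffOn ℝ s) {n b n' b' : ℝ → E}
    (hn : ∀ t ∈ s, HasDerivAt n (n' t) t) (hb : ∀ t ∈ s, HasDerivAt b (b' t) t)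
    (hnu : ∀ t ∈ s, ‖n t‖ = 1) (hbu : ∀ t ∈ s, ‖b t‖ = 1) (hnb : ∀ t ∈ s, ⟪n t, b t⟫ = 0)
    {θ : ℝ → ℝ} {θ' t : ℝ} (hθ : HasDerivAt θ θ' t) (ht : t ∈ s) :
    ⟪deriv (fun u => cos (θ u) • n u + sin (θ u) • b u) t,
      -sin (θ t) • n t + cos (θ t) • b t⟫ = θ' + ⟪n' t, b t⟫ := by
  have hn_s := (hn t ht).hasDerivWithinAt (s := s)
  have hb_s := (hb t ht).hasDerivWithinAt (s := s)
  have hnn' := inner_deriv_eq_zero_of_norm_eq_one hn_s (hs t ht) hnu ht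
  have hbb' := inner_deriv_eq_zero_of_norm_eq_one hb_s (hs t ht) hbu ht
  have hnb' : ⟪n t, b' t⟫ = -⟪n' t, b t⟫ :=
    eq_neg_of_add_eq_zero_left <|
      inner_add_inner_eq_zero_of_inner_eq_const hn_s hb_s (hs t ht) hnb ht
  rw [(hasDerivAt_cos_smul_add_sin_smul hθ (hn t ht) (hb t ht)).deriv]
  exact inner_rotated_frame_eq (sin_sq_add_cos_sq _) (hnu t ht) (hbu t ht) (hnb t ht) hnn' hbb'
    hnb'

end Frame

theorem hasDerivAt_integral_sq_mul_add_mul {x y : ℝ} {a c w : ℝ → ℝ}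
    (ha : ContinuousOn a [[x, y]]) (hc : ContinuousOn c [[x, y]])
    (hw : ContinuousOn w [[x, y]]) :
    HasDerivAt (fun s => ∫ t in x..y, (s * a t + c t) ^ 2 * w t)
      (∫ t in x..y, 2 * c t * a t * w t) 0 := by
  have hA : IntervalIntegrable (fun t => a t ^ 2 * w t) MeasureTheory.volume x y :=
    ((ha.pow 2).mul hw).intervalIntegrable
  have hB : IntervalIntegrable (fun t => 2 * c t * a t * w t) MeasureTheory.volume x y :=
    (((continuousOn_const.mul hc).mul ha).mul hw).intervalIntegrable
  have hC : IntervalIntegrable (fun t => c t ^ 2 * w t) MeasureTheory.volume x y :=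
    ((hc.pow 2).mul hw).intervalIntegrable
  have hpoly : (fun s => ∫ t in x..y, (s * a t + c t) ^ 2 * w t) = fun s =>
      s ^ 2 * (∫ t in x..y, a t ^ 2 * w t) + s * (∫ t in x..y, 2 * c t * a t * w t) +
        ∫ t in x..y, c t ^ 2 * w t := by
    funext s
    rw [← integral_const_mul, ← integral_const_mul,
      ← integral_add (hA.const_mul _) (hB.const_mul _),
      ← integral_add ((hA.const_mul _).add (hB.const_mul _)) hC]
    congr 1
    funext t
    ring
  rw [hpoly]
  simpa using (((hasDerivAt_pow 2 (0 : ℝ)).mul_const (∫ t in x..y, a t ^ 2 * w t)).add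
    ((hasDerivAt_id (0 : ℝ)).mul_const (∫ t in x..y, 2 * c t * a t * w t))).add_const
    (∫ t in x..y, c t ^ 2 * w t)

theorem penalty_twist_derivative_general
    (L : ℝ) (hL : 0 < L)
    (p' : ℝ → EuclideanSpace ℝ (Fin 3))
    (hp'c : ContinuousOn p' (Set.Icc (0 : ℝ) L))
    (n b n' b' : ℝ → EuclideanSpace ℝ (Fin 3))
    (hn : ∀ t ∈ Set.Icc (0 : ℝ) L, HasDerivAt n (n' t) t)
    (hn'c : ContinuousOn n' (Set.Icc (0 : ℝ) L))
    (hb : ∀ t ∈ Set.Icc (0 : ℝ) L, HasDerivAt b (b' t) t)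
    (hnu : ∀ t ∈ Set.Icc (0 : ℝ) L, ‖n t‖ = 1)
    (hbu : ∀ t ∈ Set.Icc (0 : ℝ) L, ‖b t‖ = 1)
    (hnb : ∀ t ∈ Set.Icc (0 : ℝ) L, ⟪n t, b t⟫ = 0)
    (φ φ' : ℝ → ℝ)
    (hφ : ∀ t ∈ Set.Icc (0 : ℝ) L, HasDerivAt φ (φ' t) t)
    (hφ'c : ContinuousOn φ' (Set.Icc (0 : ℝ) L))
    (g : ℝ → ℝ)
    (hg : g = fun s => L⁻¹ * ∫ t in (0 : ℝ)..L,
      (⟪deriv (fun u => Real.cos (s * φ u) • n u + Real.sin (s * φ u) • b u) t,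
          -Real.sin (s * φ t) • n t + Real.cos (s * φ t) • b t⟫) ^ 2 * ‖p' t‖) :
    HasDerivAt g
      (L⁻¹ * ∫ t in (0 : ℝ)..L, 2 * ⟪n' t, b t⟫ * φ' t * ‖p' t‖)
      0 := by
  have hIcc : [[0, L]] = Icc 0 L := uIcc_of_le hL.le
  have hg' : g = fun s => L⁻¹ * ∫ t in (0 : ℝ)..L, (s * φ' t + ⟪n' t, b t⟫) ^ 2 * ‖p' t‖ := by
    refine hg.trans (funext fun s => congrArg _ (integral_congr fun t ht => ?_))
    rw [hIcc] at ht
    rw [inner_deriv_rotated_frame_eq (uniqueDiffOn_Icc hL) hn hb hnu hbu hnb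
      ((hφ t ht).const_mul s) ht]
  have hβ : ContinuousOn (fun t => ⟪n' t, b t⟫) (Icc 0 L) :=
    hn'c.inner fun t ht => (hb t ht).continuousAt.continuousWithinAt
  rw [hg']
  rw [← hIcc] at hφ'c hβ hp'c
  exact (hasDerivAt_integral_sq_mul_add_mul hφ'c hβ hp'c.norm).const_mul L⁻¹

/-- Lemma 4.4, twist penalty term: the partial derivative `∂_θΨ₃[p, V_{p,θ}](φ)` of
the twist penalty `Ψ₃ = (1/L)∫₀ᴸ β²|p′| dt` at `s = 0`, where the twist function is
perturbed in direction `φ`. -/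
theorem penalty_twist_derivative
    (L : ℝ) (hL : 0 < L)
    (p p' : ℝ → EuclideanSpace ℝ (Fin 3))
    (hp : ∀ t ∈ Set.Icc (0 : ℝ) L, HasDerivAt p (p' t) t)
    (hp'c : ContinuousOn p' (Set.Icc (0 : ℝ) L))
    (hp'0 : ∀ t ∈ Set.Icc (0 : ℝ) L, p' t ≠ 0)
    (n b n' b' : ℝ → EuclideanSpace ℝ (Fin 3))
    (hn : ∀ t ∈ Set.Icc (0 : ℝ) L, HasDerivAt n (n' t) t)
    (hn'c : ContinuousOn n' (Set.Icc (0 : ℝ) L))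
    (hb : ∀ t ∈ Set.Icc (0 : ℝ) L, HasDerivAt b (b' t) t)
    (hb'c : ContinuousOn b' (Set.Icc (0 : ℝ) L))
    (hnu : ∀ t ∈ Set.Icc (0 : ℝ) L, ‖n t‖ = 1)
    (hbu : ∀ t ∈ Set.Icc (0 : ℝ) L, ‖b t‖ = 1)
    (hnb : ∀ t ∈ Set.Icc (0 : ℝ) L, ⟪n t, b t⟫ = 0)
    (φ φ' : ℝ → ℝ)
    (hφ : ∀ t ∈ Set.Icc (0 : ℝ) L, HasDerivAt φ (φ' t) t)
    (hφ'c : ContinuousOn φ' (Set.Icc (0 : ℝ) L))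
    (g : ℝ → ℝ)
    (hg : g = fun s => L⁻¹ * ∫ t in (0 : ℝ)..L,
      (⟪deriv (fun u => Real.cos (s * φ u) • n u + Real.sin (s * φ u) • b u) t,
          -Real.sin (s * φ t) • n t + Real.cos (s * φ t) • b t⟫) ^ 2 * ‖p' t‖) :
    HasDerivAt g
      (L⁻¹ * ∫ t in (0 : ℝ)..L, 2 * ⟪n' t, b t⟫ * φ' t * ‖p' t‖)
      0 :=
  penalty_twist_derivative_general L hL p' hp'c n b n' b' hn hn'c hb hnu hbu hnb φ φ' hφ hφ'c g hg
end
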